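/- arXiv:2308.14677 — 3 statements merged into one kernel-verified Lean document; each statement's English description precedes it below -/
import Mathlib

section
/- Let H be a finite simple graph, k ≥ 2 a natural number, and F a family of subsets of V(H) such that: every set in F has at most k vertices, no two distinct sets in F are contained in each other, and each A ∈ F induces a clique in H. Then every vertex x ∈ V(H) is contained in at most max(C(Δ(H), k−1), C(2k−3, k−1)) sets of F. -/
open Finset

/-- Binomials increase up to the half. -/
lemma choose_mono_of_le_half {n r s : ℕ} (h : r ≤ s) (hs : s ≤ n / 2) :
    n.choose r ≤ n.choose s := by
  induction s, h using Nat.le_induction with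
  | base => exact le_refl _
  | succ s hrs ih =>
      exact (ih (le_trans (Nat.le_succ s) hs)).trans
        (Nat.choose_le_succ_of_lt_half_left (by omega))

/-- The key numeric bound. -/
lemma choose_le_max_bound {k n Δ r : ℕ} (hk : 2 ≤ k) (hr : r ≤ k - 1) (hn : n ≤ Δ) :
    n.choose r ≤ max (Δ.choose (k - 1)) ((2 * k - 3).choose (k - 1)) := by
  rcases le_or_gt n (2 * k - 3) with hcase | hcase
  · refine le_max_of_le_right ?_
    calc n.choose r ≤ (2 * k - 3).choose r := Nat.choose_le_choose r hcase
      _ ≤ (2 * k - 3).choose ((2 * k - 3) / 2) := Nat.choose_le_middle _ _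
      _ = (2 * k - 3).choose (k - 2) := by congr 1; omega
      _ = (2 * k - 3).choose (k - 1) := by
          rw [← Nat.choose_symm (by omega : k - 2 ≤ 2 * k - 3)]
          congr 1; omega
  · refine le_max_of_le_left ?_
    calc n.choose r ≤ n.choose (k - 1) := choose_mono_of_le_half hr (by omega)
      _ ≤ Δ.choose (k - 1) := Nat.choose_le_choose _ hn

/-- if `F` is an antichain of cliques of `H`, each of size at most `k ≥ 2`,
then every vertex lies in at most `max (C(Δ(H), k−1), C(2k−3, k−1))` sets of `F`. -/
theorem vertex_in_few_antichain_cliques {V : Type*} [Fintype V] [DecidableEq V]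
    (H : SimpleGraph V) [DecidableRel H.Adj] (k : ℕ) (hk : 2 ≤ k)
    (F : Finset (Finset V))
    (hsize : ∀ A ∈ F, A.card ≤ k)
    (hanti : ∀ A ∈ F, ∀ B ∈ F, A ⊆ B → A = B)
    (hclique : ∀ A ∈ F, H.IsClique (A : Set V)) :
    ∀ x : V, (F.filter fun A => x ∈ A).card ≤
      max (H.maxDegree.choose (k - 1)) ((2 * k - 3).choose (k - 1)) := by
  intro x
  classical
  set M : ℕ := max (H.maxDegree.choose (k - 1)) ((2 * k - 3).choose (k - 1)) with hM
  set Fx := F.filter fun A => x ∈ A with hFx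
  -- each clique containing x has its other vertices among the neighbors of x
  have hsub : ∀ A ∈ Fx, A.erase x ⊆ H.neighborFinset x := by
    intro A hA v hv
    rw [mem_filter] at hA
    rw [SimpleGraph.mem_neighborFinset]
    exact ((hclique A hA.1) (by exact_mod_cast hA.2)
      (by exact_mod_cast mem_of_mem_erase hv) (Ne.symm (ne_of_mem_erase hv)))
  set N := H.neighborFinset x with hN
  set f : Finset V → Finset {v // v ∈ N} := fun A => (A.erase x).subtype (· ∈ N) with hf
  have hmapback : ∀ A ∈ Fx, (f A).map (Function.Embedding.subtype _) = A.erase x := by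
    intro A hA
    rw [hf, Finset.subtype_map, Finset.filter_true_of_mem]
    intro v hv; exact hsub A hA hv
  set 𝒜 := Fx.image f with h𝒜
  have hinj : Set.InjOn f ↑Fx := by
    intro A hA B hB hAB
    have h1 : A.erase x = B.erase x := by
      rw [← hmapback A hA, ← hmapback B hB, hAB]
    have hxA : x ∈ A := (mem_filter.1 hA).2
    have hxB : x ∈ B := (mem_filter.1 hB).2
    rw [← insert_erase hxA, ← insert_erase hxB, h1]
  have hcard𝒜 : 𝒜.card = Fx.card := card_image_of_injOn hinj
  -- each set in 𝒜 has card ≤ k - 1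
  have hsize𝒜 : ∀ s ∈ 𝒜, s.card ≤ k - 1 := by
    intro s hs
    obtain ⟨A, hA, rfl⟩ := mem_image.1 hs
    have : (f A).card = (A.erase x).card := by
      rw [← hmapback A hA, card_map]
    rw [this, card_erase_of_mem (mem_filter.1 hA).2]
    have := hsize A (mem_filter.1 hA).1
    omega
  -- 𝒜 is an antichain
  have hanti𝒜 : IsAntichain (· ⊆ ·) (𝒜 : Set (Finset {v // v ∈ N})) := by
    intro s hs t ht hst hsub'
    obtain ⟨A, hA, rfl⟩ := mem_image.1 (by exact_mod_cast hs)
    obtain ⟨B, hB, rfl⟩ := mem_image.1 (by exact_mod_cast ht)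
    apply hst
    have hAB : A ⊆ B := by
      have h1 : A.erase x ⊆ B.erase x := by
        rw [← hmapback A hA, ← hmapback B hB]
        exact map_subset_map.2 hsub'
      intro v hv
      by_cases hvx : v = x
      · rw [hvx]; exact (mem_filter.1 hB).2
      · exact mem_of_mem_erase (h1 (mem_erase.2 ⟨hvx, hv⟩))
    rw [hanti A (mem_filter.1 hA).1 B (mem_filter.1 hB).1 hAB]
  -- LYM
  set n := Fintype.card {v // v ∈ N} with hn
  have hnval : n = H.degree x := by
    rw [hn, Fintype.card_coe, hN, SimpleGraph.card_neighborFinset_eq_degree]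
  have hnΔ : n ≤ H.maxDegree := hnval ▸ H.degree_le_maxDegree x
  have hLYM := Finset.sum_card_slice_div_choose_le_one (𝕜 := ℚ) hanti𝒜
  rw [← hn] at hLYM
  have hsum : ∑ r ∈ Iic n, (𝒜 # r).card = 𝒜.card := Finset.sum_card_slice 𝒜
  -- bound each slice term
  have key : (𝒜.card : ℚ) ≤ M := by
    calc (𝒜.card : ℚ) = ∑ r ∈ range (n + 1), ((𝒜 # r).card : ℚ) := by
          have hIic : (Iic n : Finset ℕ) = range (n + 1) := by
            ext r; simp [Nat.lt_succ_iff]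
          rw [← hsum, hIic]
          push_cast
          rfl
      _ ≤ ∑ r ∈ range (n + 1), (M : ℚ) * (((𝒜 # r).card : ℚ) / (n.choose r : ℚ)) := by
          apply Finset.sum_le_sum
          intro r hr
          rw [mem_range] at hr
          by_cases hre : (𝒜 # r).card = 0
          · rw [hre]; simp
          · have hrk : r ≤ k - 1 := by
              obtain ⟨s, hs⟩ := card_pos.1 (Nat.pos_of_ne_zero hre)
              rw [Finset.mem_slice] at hs
              rw [← hs.2]; exact hsize𝒜 s hs.1
            have hpos : 0 < (n.choose r : ℚ) := by
              exact_mod_cast Nat.choose_pos (Nat.lt_succ_iff.1 hr)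
            rw [mul_div_assoc', le_div_iff₀ hpos]
            have hle : (n.choose r : ℚ) ≤ M := by
              exact_mod_cast choose_le_max_bound hk hrk hnΔ
            calc ((𝒜 # r).card : ℚ) * (n.choose r) ≤ ((𝒜 # r).card : ℚ) * M := by
                  apply mul_le_mul_of_nonneg_left hle (by positivity)
              _ = (M : ℚ) * (𝒜 # r).card := mul_comm _ _
      _ = (M : ℚ) * ∑ r ∈ range (n + 1), (((𝒜 # r).card : ℚ) / (n.choose r : ℚ)) := by
          rw [mul_sum]
      _ ≤ (M : ℚ) * 1 := by
          apply mul_le_mul_of_nonneg_left hLYM (by positivity)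
      _ = M := mul_one _
  rw [← hcard𝒜]
  exact_mod_cast key
end

section
/- For every trigraph G and vertex v ∈ V(G), there is a partial contraction sequence of width at most tww(G)+1 that contracts all of V(G)∖{v} into a single vertex while never contracting v with another vertex; i.e., tww_{V(G−v)}(G) ≤ tww(G)+1. -/
open scoped Classical

noncomputable section

/-- A trigraph: a finite graph whose edges are colored black or red. -/
structure Trigraph (V : Type*) where
  black : V → V → Prop
  red : V → V → Prop
  black_symm : ∀ u v, black u v → black v u
  red_symm : ∀ u v, red u v → red v u
  black_irrefl : ∀ v, ¬ black v v
  red_irrefl : ∀ v, ¬ red v v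
  not_black_and_red : ∀ u v, ¬ (black u v ∧ red u v)

variable {V : Type*}

/-- A simple graph seen as a trigraph with no red edges. -/
def SimpleGraph.toTrigraph (G : SimpleGraph V) : Trigraph V where
  black := G.Adj
  red _ _ := False
  black_symm _ _ h := h.symm
  red_symm _ _ h := h.elim
  black_irrefl _ h := G.irrefl h
  red_irrefl _ h := h
  not_black_and_red _ _ h := h.2

/-- Induced subtrigraph on a set of vertices. -/
def Trigraph.induce (G : Trigraph V) (s : Set V) : Trigraph s where
  black u v := G.black u.1 v.1
  red u v := G.red u.1 v.1
  black_symm _ _ h := G.black_symm _ _ h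
  red_symm _ _ h := G.red_symm _ _ h
  black_irrefl v := G.black_irrefl v.1
  red_irrefl v := G.red_irrefl v.1
  not_black_and_red u v := G.not_black_and_red u.1 v.1

/-- The discrete partition of the vertex set into singletons. -/
def discretePart (V : Type*) [Fintype V] : Finset (Finset V) :=
  Finset.univ.image fun v => ({v} : Finset V)

/-- `Q` is obtained from the partition `P` by merging (contracting) two distinct parts. -/
def MergeStep (P Q : Finset (Finset V)) : Prop :=
  ∃ A ∈ P, ∃ B ∈ P, A ≠ B ∧ Q = insert (A ∪ B) ((P.erase A).erase B)

/-- Two parts are joined by a red edge in the quotient trigraph if there is a red edge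
between them, or if they are not homogeneously connected by black edges. -/
def Trigraph.redAdj (G : Trigraph V) (A B : Finset V) : Prop :=
  A ≠ B ∧ ((∃ a ∈ A, ∃ b ∈ B, G.red a b) ∨
    ((∃ a ∈ A, ∃ b ∈ B, G.black a b) ∧ ¬ ∀ a ∈ A, ∀ b ∈ B, G.black a b))

/-- The red degree of a part `A` in the quotient of `G` by the partition `P`. -/
def Trigraph.redDeg (G : Trigraph V) (P : Finset (Finset V)) (A : Finset V) : ℕ :=
  (P.filter fun B => G.redAdj A B).card

/-- The maximum red degree of the quotient of `G` by the partition `P`. -/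
def Trigraph.maxRedDeg (G : Trigraph V) (P : Finset (Finset V)) : ℕ :=
  P.sup fun A => G.redDeg P A

/-- A contraction sequence of partitions: starts with the discrete partition, and each
step merges two parts. -/
def IsCSeq (V : Type*) [Fintype V] (len : ℕ) (f : ℕ → Finset (Finset V)) : Prop :=
  f 0 = discretePart V ∧ ∀ i < len, MergeStep (f i) (f (i + 1))

/-- The twin-width of a trigraph: the minimum over all complete contraction sequences of
the maximum red degree attained. -/
def Trigraph.tww [Fintype V] (G : Trigraph V) : ℕ :=
  sInf { w | ∃ f : ℕ → Finset (Finset V),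
    IsCSeq V (Fintype.card V - 1) f ∧
    f (Fintype.card V - 1) = {Finset.univ} ∧
    ∀ i ≤ Fintype.card V - 1, G.maxRedDeg (f i) ≤ w }

/-- The final partition of a `U`-contraction sequence: `U` is one part,
all other vertices are singletons. -/
def finalOn (V : Type*) [Fintype V] (U : Finset V) : Finset (Finset V) :=
  insert U ((Finset.univ \ U).image fun v => ({v} : Finset V))

/-- `tww_U(G)`: the minimum width of a partial contraction sequence involving only
vertices of `U` and contracting `U` into a single part. -/
def Trigraph.twwOn [Fintype V] (G : Trigraph V) (U : Finset V) : ℕ :=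
  sInf { w | ∃ f : ℕ → Finset (Finset V),
    IsCSeq V (U.card - 1) f ∧ f (U.card - 1) = finalOn V U ∧
    ∀ i ≤ U.card - 1, G.maxRedDeg (f i) ≤ w }

/-- A partition respects `A` if all vertices of `A` are singleton parts of red degree `0`. -/
def Trigraph.Respects (G : Trigraph V) (A : Finset V) (P : Finset (Finset V)) : Prop :=
  (∀ a ∈ A, ({a} : Finset V) ∈ P) ∧ ∀ a ∈ A, G.redDeg P {a} = 0

/-- A partition respecting `A` is complete if no two parts outside `A` have the same
(black) neighborhood in `A`. -/
def Trigraph.CompleteFor (G : Trigraph V) (A : Finset V) (P : Finset (Finset V)) : Prop :=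
  ∀ B ∈ P, ∀ C ∈ P, B ≠ C → Disjoint B A → Disjoint C A →
    ¬ ∀ a ∈ A, ((∃ b ∈ B, G.black b a) ↔ ∃ c ∈ C, G.black c a)

/-- `tww(G, A)`: the minimum width of a complete contraction sequence respecting `A`. -/
def Trigraph.twwR [Fintype V] (G : Trigraph V) (A : Finset V) : ℕ :=
  sInf { w | ∃ (len : ℕ) (f : ℕ → Finset (Finset V)), IsCSeq V len f ∧
    (∀ i ≤ len, G.Respects A (f i)) ∧ G.CompleteFor A (f len) ∧
    ∀ i ≤ len, G.maxRedDeg (f i) ≤ w }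

namespace TwwAux

/-- Partition invariant: parts are nonempty, pairwise disjoint, and cover. -/
def Pn (P : Finset (Finset V)) : Prop :=
  (∀ X ∈ P, X.Nonempty) ∧ (∀ X ∈ P, ∀ Y ∈ P, X ≠ Y → Disjoint X Y) ∧
    ∀ x : V, ∃ X ∈ P, x ∈ X

lemma Pn_discrete [Fintype V] : Pn (discretePart V) := by
  refine ⟨?_, ?_, ?_⟩
  · intro X hX
    simp only [discretePart, Finset.mem_image] at hX
    obtain ⟨a, -, rfl⟩ := hX
    exact ⟨a, Finset.mem_singleton_self a⟩
  · intro X hX Y hY hne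
    simp only [discretePart, Finset.mem_image] at hX hY
    obtain ⟨a, -, rfl⟩ := hX
    obtain ⟨b, -, rfl⟩ := hY
    simp only [Finset.disjoint_singleton_left, Finset.mem_singleton]
    intro h; exact hne (by rw [h])
  · intro x
    exact ⟨{x}, Finset.mem_image_of_mem _ (Finset.mem_univ x), Finset.mem_singleton_self x⟩

lemma Pn_merge {P Q : Finset (Finset V)} (h : MergeStep P Q) (hP : Pn P) : Pn Q := by
  obtain ⟨A, hA, B, hB, hAB, rfl⟩ := h
  obtain ⟨hne, hdisj, hcov⟩ := hP
  refine ⟨?_, ?_, ?_⟩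
  · intro X hX
    rcases Finset.mem_insert.1 hX with rfl | hX
    · exact (hne A hA).mono Finset.subset_union_left
    · exact hne X (Finset.mem_of_mem_erase (Finset.mem_of_mem_erase hX))
  · intro X hX Y hY hXY
    rcases Finset.mem_insert.1 hX with rfl | hX <;> rcases Finset.mem_insert.1 hY with rfl | hY
    · exact absurd rfl hXY
    · have hY' := Finset.mem_of_mem_erase (Finset.mem_of_mem_erase hY)
      have h1 : Y ≠ B := Finset.ne_of_mem_erase hY
      have h2 : Y ≠ A := Finset.ne_of_mem_erase (Finset.mem_of_mem_erase hY)
      exact Finset.disjoint_union_left.2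
        ⟨hdisj A hA Y hY' (Ne.symm h2), hdisj B hB Y hY' (Ne.symm h1)⟩
    · have hX' := Finset.mem_of_mem_erase (Finset.mem_of_mem_erase hX)
      have h1 : X ≠ B := Finset.ne_of_mem_erase hX
      have h2 : X ≠ A := Finset.ne_of_mem_erase (Finset.mem_of_mem_erase hX)
      exact (Finset.disjoint_union_left.2
        ⟨hdisj A hA X hX' (Ne.symm h2), hdisj B hB X hX' (Ne.symm h1)⟩).symm
    · have hX' := Finset.mem_of_mem_erase (Finset.mem_of_mem_erase hX)
      have hY' := Finset.mem_of_mem_erase (Finset.mem_of_mem_erase hY)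
      exact hdisj X hX' Y hY' hXY
  · intro x
    obtain ⟨X, hX, hx⟩ := hcov x
    by_cases hXA : X = A
    · exact ⟨A ∪ B, Finset.mem_insert_self _ _, Finset.mem_union_left _ (hXA ▸ hx)⟩
    by_cases hXB : X = B
    · exact ⟨A ∪ B, Finset.mem_insert_self _ _, Finset.mem_union_right _ (hXB ▸ hx)⟩
    exact ⟨X, Finset.mem_insert_of_mem
      (Finset.mem_erase.2 ⟨hXB, Finset.mem_erase.2 ⟨hXA, hX⟩⟩), hx⟩

lemma singleton_mem_of_merge {P Q : Finset (Finset V)} (h : MergeStep P Q) (hP : Pn P)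
    {v : V} (hv : ({v} : Finset V) ∈ Q) : ({v} : Finset V) ∈ P := by
  obtain ⟨A, hA, B, hB, hAB, rfl⟩ := h
  rcases Finset.mem_insert.1 hv with h1 | h1
  · exfalso
    have hAs : A ⊆ ({v} : Finset V) := h1 ▸ Finset.subset_union_left
    have hBs : B ⊆ ({v} : Finset V) := h1 ▸ Finset.subset_union_right
    rcases Finset.subset_singleton_iff.1 hAs with rfl | rfl
    · exact (hP.1 ∅ hA).ne_empty rfl
    rcases Finset.subset_singleton_iff.1 hBs with rfl | rfl
    · exact (hP.1 ∅ hB).ne_empty rfl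
    exact hAB rfl
  · exact Finset.mem_of_mem_erase (Finset.mem_of_mem_erase h1)

/-- The image of a partition under keeping `v` apart. -/
def phi (v : V) (P : Finset (Finset V)) : Finset (Finset V) :=
  insert ({v} : Finset V) ((P.image fun X => X.erase v).erase ∅)

lemma notMem_of_singleton_mem {P : Finset (Finset V)} {v : V} (hP : Pn P)
    (hv : ({v} : Finset V) ∈ P) {X : Finset V} (hX : X ∈ P) (hXv : X ≠ {v}) : v ∉ X :=
  fun hvX => (Finset.disjoint_left.1 (hP.2.1 X hX _ hv hXv) hvX) (Finset.mem_singleton_self v)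

lemma phi_eq_self {P : Finset (Finset V)} {v : V} (hP : Pn P)
    (hv : ({v} : Finset V) ∈ P) : phi v P = P := by
  ext X
  simp only [phi, Finset.mem_insert, Finset.mem_erase, Finset.mem_image]
  constructor
  · rintro (rfl | ⟨hX0, Y, hY, rfl⟩)
    · exact hv
    · by_cases hYv : Y = ({v} : Finset V)
      · subst hYv; simp at hX0
      · rw [Finset.erase_eq_of_notMem (notMem_of_singleton_mem hP hv hY hYv)]; exact hY
  · intro hX
    by_cases hXv : X = ({v} : Finset V)
    · exact Or.inl hXv
    · exact Or.inr ⟨(hP.1 X hX).ne_empty, X, hX, Finset.erase_eq_of_notMem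
        (notMem_of_singleton_mem hP hv hX hXv)⟩

lemma erase_ne_empty {P : Finset (Finset V)} {v : V} (hP : Pn P)
    (hv : ({v} : Finset V) ∉ P) {X : Finset V} (hX : X ∈ P) : X.erase v ≠ ∅ := by
  intro h
  have hsub : X ⊆ {v} := by
    intro x hx
    by_contra hxv
    have : x ∈ X.erase v := Finset.mem_erase.2 ⟨fun hh => hxv (hh ▸ Finset.mem_singleton_self v), hx⟩
    rw [h] at this
    exact absurd this (Finset.notMem_empty x)
  rcases Finset.subset_singleton_iff.1 hsub with rfl | rfl
  · exact (hP.1 ∅ hX).ne_empty rfl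
  · exact hv hX

lemma erase_injOn {P : Finset (Finset V)} {v : V} (hP : Pn P)
    (hv : ({v} : Finset V) ∉ P) :
    ∀ X ∈ P, ∀ Y ∈ P, X.erase v = Y.erase v → X = Y := by
  intro X hX Y hY h
  by_contra hne'
  have hd := hP.2.1 X hX Y hY hne'
  have hsub : X.erase v ⊆ X := Finset.erase_subset _ _
  have hsub2 : X.erase v ⊆ Y := h ▸ Finset.erase_subset _ _
  have hem : X.erase v = ∅ := Finset.eq_empty_of_forall_notMem fun a ha =>
    (Finset.disjoint_left.1 hd (hsub ha)) (hsub2 ha)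
  exact erase_ne_empty hP hv hX hem

lemma mem_phi {P : Finset (Finset V)} {v : V} (hP : Pn P)
    (hv : ({v} : Finset V) ∉ P) {X : Finset V} :
    X ∈ phi v P ↔ X = {v} ∨ ∃ Y ∈ P, X = Y.erase v := by
  simp only [phi, Finset.mem_insert, Finset.mem_erase, Finset.mem_image]
  constructor
  · rintro (rfl | ⟨-, Y, hY, rfl⟩)
    · exact Or.inl rfl
    · exact Or.inr ⟨Y, hY, rfl⟩
  · rintro (rfl | ⟨Y, hY, rfl⟩)
    · exact Or.inl rfl
    · exact Or.inr ⟨erase_ne_empty hP hv hY, Y, hY, rfl⟩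

lemma singleton_ne_erase (v : V) (Y : Finset V) : ({v} : Finset V) ≠ Y.erase v :=
  fun h => (Finset.notMem_erase v Y) (h ▸ Finset.mem_singleton_self v)

lemma mergeStep_phi {P Q : Finset (Finset V)} {v : V} (hP : Pn P)
    (hv : ({v} : Finset V) ∉ P) (h : MergeStep P Q) :
    MergeStep (phi v P) (phi v Q) := by
  have hQ : Pn Q := Pn_merge h hP
  have hvQ : ({v} : Finset V) ∉ Q := fun hh => hv (singleton_mem_of_merge h hP hh)
  obtain ⟨A, hA, B, hB, hAB, rfl⟩ := h
  refine ⟨A.erase v, (mem_phi hP hv).2 (Or.inr ⟨A, hA, rfl⟩),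
    B.erase v, (mem_phi hP hv).2 (Or.inr ⟨B, hB, rfl⟩),
    fun hh => hAB (erase_injOn hP hv A hA B hB hh), ?_⟩
  ext X
  rw [mem_phi hQ hvQ]
  simp only [Finset.mem_insert, Finset.mem_erase]
  constructor
  · rintro (rfl | ⟨Y, rfl | ⟨hYB, hYA, hYP⟩, rfl⟩)
    · exact Or.inr ⟨singleton_ne_erase v B, singleton_ne_erase v A,
        (mem_phi hP hv).2 (Or.inl rfl)⟩
    · exact Or.inl (Finset.erase_union_distrib A B v)
    · exact Or.inr ⟨fun hh => hYB (erase_injOn hP hv Y hYP B hB hh),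
        fun hh => hYA (erase_injOn hP hv Y hYP A hA hh),
        (mem_phi hP hv).2 (Or.inr ⟨Y, hYP, rfl⟩)⟩
  · rintro (rfl | ⟨hXB, hXA, hX⟩)
    · exact Or.inr ⟨A ∪ B, Or.inl rfl, (Finset.erase_union_distrib A B v).symm⟩
    · rcases (mem_phi hP hv).1 hX with rfl | ⟨Y, hY, rfl⟩
      · exact Or.inl rfl
      · have hYA : Y ≠ A := fun hh => hXA (by rw [hh])
        have hYB : Y ≠ B := fun hh => hXB (by rw [hh])
        exact Or.inr ⟨Y, Or.inr ⟨hYB, hYA, hY⟩, rfl⟩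

lemma phi_merge_eq_aux {P : Finset (Finset V)} {v : V} {B : Finset V} (hP : Pn P)
    (hvP : ({v} : Finset V) ∈ P) (hB : B ∈ P) (hAB : ({v} : Finset V) ≠ B) :
    phi v (insert ({v} ∪ B) ((P.erase {v}).erase B)) = P := by
  have hvB : v ∉ B := notMem_of_singleton_mem hP hvP hB (Ne.symm hAB)
  have hBne : B.Nonempty := hP.1 B hB
  have hQ : Pn (insert ({v} ∪ B) ((P.erase {v}).erase B)) :=
    Pn_merge ⟨{v}, hvP, B, hB, hAB, rfl⟩ hP
  have hvQ : ({v} : Finset V) ∉ insert ({v} ∪ B) ((P.erase {v}).erase B) := by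
    intro hh
    rcases Finset.mem_insert.1 hh with h1 | h1
    · have : B ⊆ ({v} : Finset V) := h1 ▸ Finset.subset_union_right
      rcases Finset.subset_singleton_iff.1 this with rfl | rfl
      · exact hBne.ne_empty rfl
      · exact hAB rfl
    · exact (Finset.ne_of_mem_erase (Finset.mem_of_mem_erase h1)) rfl
  have hBerase : ({v} ∪ B).erase v = B := by
    rw [Finset.erase_union_distrib, Finset.erase_singleton, Finset.empty_union,
      Finset.erase_eq_of_notMem hvB]
  ext X
  rw [mem_phi hQ hvQ]
  constructor
  · rintro (rfl | ⟨Y, hY, rfl⟩)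
    · exact hvP
    · rcases Finset.mem_insert.1 hY with rfl | hY'
      · rw [hBerase]; exact hB
      · have hYP := Finset.mem_of_mem_erase (Finset.mem_of_mem_erase hY')
        have hYv : Y ≠ {v} := Finset.ne_of_mem_erase (Finset.mem_of_mem_erase hY')
        rw [Finset.erase_eq_of_notMem (notMem_of_singleton_mem hP hvP hYP hYv)]
        exact hYP
  · intro hX
    by_cases hXv : X = ({v} : Finset V)
    · exact Or.inl hXv
    right
    by_cases hXB : X = B
    · exact ⟨{v} ∪ B, Finset.mem_insert_self _ _, by rw [hBerase, hXB]⟩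
    · exact ⟨X, Finset.mem_insert_of_mem
        (Finset.mem_erase.2 ⟨hXB, Finset.mem_erase.2 ⟨hXv, hX⟩⟩),
        (Finset.erase_eq_of_notMem (notMem_of_singleton_mem hP hvP hX hXv)).symm⟩

lemma phi_merge_eq {P Q : Finset (Finset V)} {v : V} (hP : Pn P) (h : MergeStep P Q)
    (hvP : ({v} : Finset V) ∈ P) (hvQ : ({v} : Finset V) ∉ Q) :
    phi v Q = phi v P := by
  rw [phi_eq_self hP hvP]
  obtain ⟨A, hA, B, hB, hAB, rfl⟩ := h
  have hmem : ({v} : Finset V) = A ∨ ({v} : Finset V) = B := by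
    by_contra hc
    push_neg at hc
    exact hvQ (Finset.mem_insert_of_mem
      (Finset.mem_erase.2 ⟨hc.2, Finset.mem_erase.2 ⟨hc.1, hvP⟩⟩))
  rcases hmem with rfl | rfl
  · exact phi_merge_eq_aux hP hvP hB hAB
  · have : insert (A ∪ {v}) ((P.erase A).erase {v}) =
        insert ({v} ∪ A) ((P.erase {v}).erase A) := by
      rw [Finset.union_comm, Finset.erase_right_comm]
    rw [this]
    exact phi_merge_eq_aux hP hvP hA (Ne.symm hAB)

lemma redAdj_subset (G : Trigraph V) {A B A₀ B₀ : Finset V} (hA : A ⊆ A₀) (hB : B ⊆ B₀)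
    (hne : A₀ ≠ B₀) (h : G.redAdj A B) : G.redAdj A₀ B₀ := by
  obtain ⟨-, h⟩ := h
  refine ⟨hne, ?_⟩
  rcases h with ⟨a, ha, b, hb, hr⟩ | ⟨⟨a, ha, b, hb, hbl⟩, hno⟩
  · exact Or.inl ⟨a, hA ha, b, hB hb, hr⟩
  · exact Or.inr ⟨⟨a, hA ha, b, hB hb, hbl⟩,
      fun hall => hno fun a' ha' b' hb' => hall a' (hA ha') b' (hB hb')⟩

lemma redDeg_le_max (G : Trigraph V) {P : Finset (Finset V)} {A : Finset V} (hA : A ∈ P) :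
    G.redDeg P A ≤ G.maxRedDeg P :=
  Finset.le_sup hA

lemma redDeg_phi_le (G : Trigraph V) {P : Finset (Finset V)} {v : V}
    (hP : Pn P) (hv : ({v} : Finset V) ∉ P) {X : Finset V} (hX : X ∈ phi v P) :
    G.redDeg (phi v P) X ≤ G.maxRedDeg P + 1 := by
  rcases (mem_phi hP hv).1 hX with rfl | ⟨Y, hY, rfl⟩
  · obtain ⟨C, hC, hvC⟩ := hP.2.2 v
    have hsub : (phi v P).filter (fun B => G.redAdj {v} B) ⊆
        insert (C.erase v) ((P.filter fun Z => G.redAdj C Z).image fun Z => Z.erase v) := by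
      intro B' hB'
      obtain ⟨hB'1, hB'2⟩ := Finset.mem_filter.1 hB'
      rcases (mem_phi hP hv).1 hB'1 with rfl | ⟨Z, hZ, rfl⟩
      · exact absurd rfl hB'2.1
      by_cases hZC : Z = C
      · subst hZC; exact Finset.mem_insert_self _ _
      · have hCZ : G.redAdj C (Z.erase v) :=
          redAdj_subset G (Finset.singleton_subset_iff.2 hvC) (Finset.Subset.refl _)
            (fun hh => erase_ne_empty hP hv hZ (by
              have : v ∉ C := hh ▸ Finset.notMem_erase v Z
              exact absurd hvC this)) hB'2
        have hCZ' : G.redAdj C Z := redAdj_subset G (Finset.Subset.refl _)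
          (Finset.erase_subset _ _) (Ne.symm hZC) hCZ
        exact Finset.mem_insert_of_mem (Finset.mem_image_of_mem _
          (Finset.mem_filter.2 ⟨hZ, hCZ'⟩))
    calc G.redDeg (phi v P) {v}
        ≤ (insert (C.erase v) ((P.filter fun Z => G.redAdj C Z).image
            fun Z => Z.erase v)).card := Finset.card_le_card hsub
      _ ≤ ((P.filter fun Z => G.redAdj C Z).image fun Z => Z.erase v).card + 1 :=
          Finset.card_insert_le _ _
      _ ≤ (P.filter fun Z => G.redAdj C Z).card + 1 := by
          exact Nat.add_le_add_right (Finset.card_image_le) 1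
      _ ≤ G.maxRedDeg P + 1 := Nat.add_le_add_right (redDeg_le_max G hC) 1
  · have hsub : (phi v P).filter (fun B => G.redAdj (Y.erase v) B) ⊆
        insert ({v} : Finset V)
          ((P.filter fun Z => G.redAdj Y Z).image fun Z => Z.erase v) := by
      intro B' hB'
      obtain ⟨hB'1, hB'2⟩ := Finset.mem_filter.1 hB'
      rcases (mem_phi hP hv).1 hB'1 with rfl | ⟨Z, hZ, rfl⟩
      · exact Finset.mem_insert_self _ _
      have hZY : Z ≠ Y := by
        rintro rfl
        exact hB'2.1 rfl
      have : G.redAdj Y Z := redAdj_subset G (Finset.erase_subset _ _)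
        (Finset.erase_subset _ _) (Ne.symm hZY) hB'2
      exact Finset.mem_insert_of_mem (Finset.mem_image_of_mem _
        (Finset.mem_filter.2 ⟨hZ, this⟩))
    calc G.redDeg (phi v P) (Y.erase v)
        ≤ (insert ({v} : Finset V) ((P.filter fun Z => G.redAdj Y Z).image
            fun Z => Z.erase v)).card := Finset.card_le_card hsub
      _ ≤ ((P.filter fun Z => G.redAdj Y Z).image fun Z => Z.erase v).card + 1 :=
          Finset.card_insert_le _ _
      _ ≤ (P.filter fun Z => G.redAdj Y Z).card + 1 :=
          Nat.add_le_add_right (Finset.card_image_le) 1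
      _ ≤ G.maxRedDeg P + 1 := Nat.add_le_add_right (redDeg_le_max G hY) 1

lemma maxRedDeg_phi_le (G : Trigraph V) {P : Finset (Finset V)} {v : V} (hP : Pn P) :
    G.maxRedDeg (phi v P) ≤ G.maxRedDeg P + 1 := by
  by_cases hv : ({v} : Finset V) ∈ P
  · rw [phi_eq_self hP hv]; exact Nat.le_succ _
  · exact Finset.sup_le fun X hX => redDeg_phi_le G hP hv hX

lemma phi_discrete [Fintype V] (v : V) : phi v (discretePart V) = discretePart V :=
  phi_eq_self Pn_discrete (Finset.mem_image_of_mem _ (Finset.mem_univ v))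

lemma phi_univ [Fintype V] (v : V) (h2 : 2 ≤ Fintype.card V) :
    phi v ({Finset.univ} : Finset (Finset V)) = finalOn V (Finset.univ.erase v) := by
  have hne : (Finset.univ.erase v : Finset V) ≠ ∅ := by
    intro h
    have := Finset.card_erase_of_mem (Finset.mem_univ v)
    rw [h] at this
    simp only [Finset.card_empty, Finset.card_univ] at this
    omega
  have himg : (({Finset.univ} : Finset (Finset V)).image fun X => X.erase v) =
      {Finset.univ.erase v} := Finset.image_singleton _ _
  have hdel : ({Finset.univ.erase v} : Finset (Finset V)).erase ∅ =
      {Finset.univ.erase v} := by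
    apply Finset.erase_eq_of_notMem
    simp only [Finset.mem_singleton]
    exact fun h => hne h.symm
  have hdiff : (Finset.univ \ Finset.univ.erase v : Finset V) = {v} := by
    ext x
    simp [Finset.mem_sdiff, Finset.mem_erase]
  rw [phi, himg, hdel, finalOn, hdiff, Finset.image_singleton]
  exact Finset.pair_comm _ _

lemma maxRedDeg_le_card (G : Trigraph V) (P : Finset (Finset V)) :
    G.maxRedDeg P ≤ P.card :=
  Finset.sup_le fun _ _ => Finset.card_filter_le _ _

lemma tww_set_nonempty (V : Type*) [Fintype V] (G : Trigraph V) (h1 : 1 ≤ Fintype.card V) :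
    { w | ∃ f : ℕ → Finset (Finset V),
      IsCSeq V (Fintype.card V - 1) f ∧
      f (Fintype.card V - 1) = {Finset.univ} ∧
      ∀ i ≤ Fintype.card V - 1, G.maxRedDeg (f i) ≤ w }.Nonempty := by
  set n := Fintype.card V with hn
  have h0 : 0 < n := h1
  set e : Fin n ≃ V := (Fintype.equivFin V).symm with he
  set f : ℕ → Finset (Finset V) := fun i =>
    insert ((Finset.univ.filter fun j : Fin n => (j : ℕ) ≤ i).image e)
      ((Finset.univ.filter fun j : Fin n => i < (j : ℕ)).image fun j => ({e j} : Finset V))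
    with hf
  refine ⟨n + 1, f, ⟨?_, ?_⟩, ?_, ?_⟩
  · -- f 0 = discretePart
    ext X
    simp only [hf, discretePart, Finset.mem_insert, Finset.mem_image, Finset.mem_filter,
      Finset.mem_univ, true_and]
    constructor
    · rintro (rfl | ⟨j, -, rfl⟩)
      · refine ⟨e ⟨0, h0⟩, ?_⟩
        have : (Finset.univ.filter fun j : Fin n => (j : ℕ) ≤ 0) = {⟨0, h0⟩} := by
          ext j
          simp only [Finset.mem_filter, Finset.mem_univ, true_and, Finset.mem_singleton,
            Nat.le_zero, Fin.ext_iff]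
        rw [this, Finset.image_singleton]
      · exact ⟨e j, rfl⟩
    · rintro ⟨u, rfl⟩
      by_cases hu : (e.symm u : ℕ) ≤ 0
      · left
        have : (Finset.univ.filter fun j : Fin n => (j : ℕ) ≤ 0) = {e.symm u} := by
          ext j
          simp only [Finset.mem_filter, Finset.mem_univ, true_and, Finset.mem_singleton,
            Nat.le_zero, Fin.ext_iff]
          omega
        rw [this, Finset.image_singleton, Equiv.apply_symm_apply]
      · exact Or.inr ⟨e.symm u, by omega, by rw [Equiv.apply_symm_apply]⟩
  · -- merge steps
    intro i hi
    have hi1 : i + 1 < n := by omega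
    have hmk : ((⟨i + 1, hi1⟩ : Fin n) : ℕ) = i + 1 := rfl
    refine ⟨(Finset.univ.filter fun j : Fin n => (j : ℕ) ≤ i).image e,
      Finset.mem_insert_self _ _,
      ({e ⟨i + 1, hi1⟩} : Finset V), ?_, ?_, ?_⟩
    · exact Finset.mem_insert_of_mem (Finset.mem_image_of_mem _
        (Finset.mem_filter.2 ⟨Finset.mem_univ _, by simp⟩))
    · intro h
      have h0mem : e ⟨0, h0⟩ ∈ (Finset.univ.filter fun j : Fin n => (j : ℕ) ≤ i).image e :=
        Finset.mem_image_of_mem _ (Finset.mem_filter.2 ⟨Finset.mem_univ _, Nat.zero_le i⟩)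
      rw [h] at h0mem
      simp only [Finset.mem_singleton, e.injective.eq_iff, Fin.ext_iff, hmk] at h0mem
      omega
    · -- the partition identity
      have hA : ∀ X : Finset V,
          X ∈ f (i + 1) ↔ X = (Finset.univ.filter fun j : Fin n => (j : ℕ) ≤ i + 1).image e ∨
            ∃ j : Fin n, i + 1 < (j : ℕ) ∧ X = {e j} := by
        intro X
        simp only [hf, Finset.mem_insert, Finset.mem_image, Finset.mem_filter,
          Finset.mem_univ, true_and]
        constructor
        · rintro (rfl | ⟨j, hj, rfl⟩)
          · exact Or.inl rfl
          · exact Or.inr ⟨j, hj, rfl⟩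
        · rintro (rfl | ⟨j, hj, rfl⟩)
          · exact Or.inl rfl
          · exact Or.inr ⟨j, hj, rfl⟩
      have hunion : ((Finset.univ.filter fun j : Fin n => (j : ℕ) ≤ i).image e) ∪
          ({e ⟨i + 1, hi1⟩} : Finset V) =
          (Finset.univ.filter fun j : Fin n => (j : ℕ) ≤ i + 1).image e := by
        ext x
        simp only [Finset.mem_union, Finset.mem_image, Finset.mem_filter, Finset.mem_univ,
          true_and, Finset.mem_singleton]
        constructor
        · rintro (⟨j, hj, rfl⟩ | rfl)
          · exact ⟨j, by omega, rfl⟩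
          · exact ⟨⟨i + 1, hi1⟩, by rw [hmk], rfl⟩
        · rintro ⟨j, hj, rfl⟩
          rcases Nat.lt_or_ge (j : ℕ) (i + 1) with hlt | hge
          · exact Or.inl ⟨j, by omega, rfl⟩
          · right
            have hji : (j : ℕ) = i + 1 := le_antisymm hj hge
            exact congrArg e (Fin.ext (by rw [hmk, hji]))
      ext X
      rw [hA]
      simp only [Finset.mem_insert, Finset.mem_erase]
      constructor
      · rintro (rfl | ⟨j, hj, rfl⟩)
        · exact Or.inl hunion.symm
        · refine Or.inr ⟨?_, ?_, ?_⟩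
          · simp only [Finset.singleton_inj, Ne, e.injective.eq_iff, Fin.ext_iff, hmk]
            omega
          · intro h
            have h0mem : e ⟨0, h0⟩ ∈
                (Finset.univ.filter fun k : Fin n => (k : ℕ) ≤ i).image e :=
              Finset.mem_image_of_mem _
                (Finset.mem_filter.2 ⟨Finset.mem_univ _, Nat.zero_le i⟩)
            rw [← h] at h0mem
            simp only [Finset.mem_singleton, e.injective.eq_iff, Fin.ext_iff, hmk] at h0mem
            omega
          · simp only [hf, Finset.mem_insert, Finset.mem_image, Finset.mem_filter,
              Finset.mem_univ, true_and]
            exact Or.inr ⟨j, by omega, rfl⟩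
      · rintro (rfl | ⟨hXB, hXA, hX⟩)
        · exact Or.inl hunion
        · simp only [hf, Finset.mem_insert, Finset.mem_image, Finset.mem_filter,
            Finset.mem_univ, true_and] at hX
          rcases hX with rfl | ⟨j, hj, rfl⟩
          · exact absurd rfl hXA
          · refine Or.inr ⟨j, ?_, rfl⟩
            rcases Nat.lt_or_ge (i + 1) (j : ℕ) with h' | h'
            · exact h'
            · exfalso
              apply hXB
              have hji : (j : ℕ) = i + 1 := by omega
              exact congrArg (fun k => ({e k} : Finset V)) (Fin.ext (by rw [hmk, hji]))
  · -- final partition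
    have hfull : (Finset.univ.filter fun j : Fin n => (j : ℕ) ≤ n - 1) = Finset.univ := by
      ext j
      simp only [Finset.mem_filter, Finset.mem_univ, true_and, iff_true]
      have := j.isLt
      omega
    have hemp : (Finset.univ.filter fun j : Fin n => n - 1 < (j : ℕ)) = ∅ := by
      ext j
      simp only [Finset.mem_filter, Finset.mem_univ, true_and, Finset.notMem_empty,
        iff_false]
      have := j.isLt
      omega
    have himg : Finset.image (⇑e) Finset.univ = Finset.univ := by
      ext x
      simp only [Finset.mem_image, Finset.mem_univ, true_and, iff_true]
      exact ⟨e.symm x, Equiv.apply_symm_apply e x⟩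
    simp only [hf, hfull, hemp, Finset.image_empty, himg, Finset.insert_empty]
  · -- width bound
    intro i hi
    refine le_trans (maxRedDeg_le_card G _) ?_
    refine le_trans (Finset.card_insert_le _ _) ?_
    have : ((Finset.univ.filter fun j : Fin n => i < (j : ℕ)).image
        fun j => ({e j} : Finset V)).card ≤ n := by
      refine le_trans Finset.card_image_le ?_
      refine le_trans (Finset.card_filter_le _ _) ?_
      simp
    omega

end TwwAux

/-- there is a partial contraction sequence of width at most `tww(G) + 1`
contracting all of `V(G) ∖ {v}` into one part while never contracting `v`. -/
theorem twwOn_erase_le {V : Type*} [Fintype V] (G : Trigraph V) (v : V) :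
    G.twwOn (Finset.univ.erase v) ≤ G.tww + 1 := by
  classical
  have hn1 : 1 ≤ Fintype.card V := Fintype.card_pos_iff.2 ⟨v⟩
  by_cases h2 : 2 ≤ Fintype.card V
  swap
  · -- degenerate case: card V = 1, the twwOn set is empty, so twwOn = 0
    have hcard1 : Fintype.card V = 1 := by omega
    have hU : (Finset.univ.erase v : Finset V) = ∅ := by
      have := Finset.card_erase_of_mem (Finset.mem_univ v)
      rw [Finset.card_univ, hcard1] at this
      exact Finset.card_eq_zero.1 this
    have hset : { w | ∃ f : ℕ → Finset (Finset V),
        IsCSeq V ((Finset.univ.erase v).card - 1) f ∧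
        f ((Finset.univ.erase v).card - 1) = finalOn V (Finset.univ.erase v) ∧
        ∀ i ≤ (Finset.univ.erase v).card - 1,
          G.maxRedDeg (f i) ≤ w } = ∅ := by
      ext w
      simp only [Set.mem_setOf_eq, Set.mem_empty_iff_false, iff_false]
      rintro ⟨f, ⟨hf0, -⟩, hfin, -⟩
      rw [hU] at hfin
      simp only [Finset.card_empty, Nat.zero_sub] at hfin
      rw [hf0] at hfin
      have : (∅ : Finset V) ∈ discretePart V := by
        rw [hfin, finalOn]
        exact Finset.mem_insert_self _ _
      simp only [discretePart, Finset.mem_image] at this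
      obtain ⟨a, -, ha⟩ := this
      exact Finset.singleton_ne_empty a ha
    rw [Trigraph.twwOn, hset, Nat.sInf_empty]
    exact Nat.zero_le _
  -- main case
  set n := Fintype.card V with hn
  obtain ⟨f, ⟨hf0, hfstep⟩, hful, hbd⟩ :
      ∃ f : ℕ → Finset (Finset V), IsCSeq V (n - 1) f ∧
        f (n - 1) = {Finset.univ} ∧
        ∀ i ≤ n - 1, G.maxRedDeg (f i) ≤ G.tww :=
    Nat.sInf_mem (TwwAux.tww_set_nonempty V G hn1)
  have hPn : ∀ i ≤ n - 1, TwwAux.Pn (f i) := by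
    intro i
    induction i with
    | zero => intro _; rw [hf0]; exact TwwAux.Pn_discrete
    | succ i ih =>
      intro h
      exact TwwAux.Pn_merge (hfstep i (by omega)) (ih (by omega))
  have hvmono : ∀ j ≤ n - 1, ∀ i ≤ j, ({v} : Finset V) ∈ f j → ({v} : Finset V) ∈ f i := by
    intro j
    induction j with
    | zero => intro _ i hi hm; rw [Nat.le_zero.1 hi]; exact hm
    | succ j ih =>
      intro hj i hi hm
      rcases Nat.lt_succ_iff_lt_or_eq.1 (Nat.lt_succ_of_le hi) with h' | h'
      · exact ih (by omega) i (by omega)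
          (TwwAux.singleton_mem_of_merge (hfstep j (by omega)) (hPn j (by omega)) hm)
      · rw [h']; exact hm
  set t := Nat.findGreatest (fun i => ({v} : Finset V) ∈ f i) (n - 1) with ht
  have ht_le : t ≤ n - 1 := Nat.findGreatest_le _
  have ht_mem : ({v} : Finset V) ∈ f t := by
    rw [ht]
    exact Nat.findGreatest_spec (P := fun i => ({v} : Finset V) ∈ f i) (Nat.zero_le _)
      (by show ({v} : Finset V) ∈ f 0
          rw [hf0]; exact Finset.mem_image_of_mem _ (Finset.mem_univ v))
  have ht_notin : ∀ i, t < i → i ≤ n - 1 → ({v} : Finset V) ∉ f i := by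
    intro i h1' h2'
    rw [ht] at h1'
    exact Nat.findGreatest_is_greatest (P := fun i => ({v} : Finset V) ∈ f i) h1' h2'
  have ht_in : ∀ i ≤ t, ({v} : Finset V) ∈ f i := fun i hi => hvmono t ht_le i hi ht_mem
  have hvuniv : ({v} : Finset V) ≠ (Finset.univ : Finset V) := by
    intro h
    have := congrArg Finset.card h
    simp only [Finset.card_singleton, Finset.card_univ] at this
    omega
  have ht_lt : t < n - 1 := by
    rcases Nat.lt_or_ge t (n - 1) with h' | h'
    · exact h'
    · exfalso
      have : t = n - 1 := le_antisymm ht_le h'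
      rw [this, hful] at ht_mem
      exact hvuniv (Finset.mem_singleton.1 ht_mem)
  set g : ℕ → Finset (Finset V) :=
    fun j => TwwAux.phi v (f (if j ≤ t then j else j + 1)) with hg
  have hU1 : (Finset.univ.erase v : Finset V).card - 1 = n - 2 := by
    rw [Finset.card_erase_of_mem (Finset.mem_univ v), Finset.card_univ]
    omega
  have hg0 : g 0 = discretePart V := by
    simp only [hg, if_pos (Nat.zero_le t)]
    rw [hf0]
    exact TwwAux.phi_discrete v
  have hgstep : ∀ j < n - 2, MergeStep (g j) (g (j + 1)) := by
    intro j hj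
    have hgj : ∀ k, k ≤ t → g k = TwwAux.phi v (f k) := by
      intro k hk
      simp only [hg, if_pos hk]
    have hgj' : ∀ k, ¬ k ≤ t → g k = TwwAux.phi v (f (k + 1)) := by
      intro k hk
      simp only [hg, if_neg hk]
    by_cases hj1 : j + 1 ≤ t
    · have hjt : j ≤ t := by omega
      rw [hgj j hjt, hgj (j + 1) hj1]
      rw [TwwAux.phi_eq_self (hPn j (by omega)) (ht_in j hjt),
        TwwAux.phi_eq_self (hPn (j + 1) (by omega)) (ht_in (j + 1) hj1)]
      exact hfstep j (by omega)
    · by_cases hjt : j ≤ t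
      · have hjt' : j = t := by omega
        rw [hgj j hjt, hgj' (j + 1) (by omega)]
        have heq : TwwAux.phi v (f (j + 1)) = TwwAux.phi v (f j) :=
          TwwAux.phi_merge_eq (hPn j (by omega)) (hfstep j (by omega))
            (ht_in j hjt) (ht_notin (j + 1) (by omega) (by omega))
        rw [← heq]
        exact TwwAux.mergeStep_phi (hPn (j + 1) (by omega))
          (ht_notin (j + 1) (by omega) (by omega)) (hfstep (j + 1) (by omega))
      · rw [hgj' j hjt, hgj' (j + 1) (by omega)]
        exact TwwAux.mergeStep_phi (hPn (j + 1) (by omega))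
          (ht_notin (j + 1) (by omega) (by omega)) (hfstep (j + 1) (by omega))
  have hgfin : g (n - 2) = finalOn V (Finset.univ.erase v) := by
    have hfin' : TwwAux.phi v (f (n - 1)) = finalOn V (Finset.univ.erase v) := by
      rw [hful]
      exact TwwAux.phi_univ v h2
    by_cases hlast : n - 2 ≤ t
    · have htn : t = n - 2 := by omega
      rw [show g (n - 2) = TwwAux.phi v (f (n - 2)) from by simp only [hg, if_pos hlast]]
      have heq : TwwAux.phi v (f (n - 2 + 1)) = TwwAux.phi v (f (n - 2)) :=
        TwwAux.phi_merge_eq (hPn (n - 2) (by omega)) (hfstep (n - 2) (by omega))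
          (ht_in (n - 2) (by omega)) (ht_notin (n - 2 + 1) (by omega) (by omega))
      rw [← heq, show n - 2 + 1 = n - 1 from by omega]
      exact hfin'
    · rw [show g (n - 2) = TwwAux.phi v (f (n - 2 + 1)) from by simp only [hg, if_neg hlast],
        show n - 2 + 1 = n - 1 from by omega]
      exact hfin'
  have hgbd : ∀ j ≤ n - 2, G.maxRedDeg (g j) ≤ G.tww + 1 := by
    intro j hj
    have hk : (if j ≤ t then j else j + 1) ≤ n - 1 := by
      split <;> omega
    calc G.maxRedDeg (g j)
        ≤ G.maxRedDeg (f (if j ≤ t then j else j + 1)) + 1 :=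
          TwwAux.maxRedDeg_phi_le G (hPn _ hk)
      _ ≤ G.tww + 1 := Nat.add_le_add_right (hbd _ hk) 1
  refine Nat.sInf_le ?_
  rw [Set.mem_setOf_eq, hU1]
  exact ⟨g, ⟨hg0, hgstep⟩, hgfin, hgbd⟩

end
end

section
/- Every tree has twin-width at most 2. -/
open scoped Classical

noncomputable section

variable {V : Type*}

/-!
Keep every part of the partition either a singleton or *hanging* at some vertex `v`: every edge
leaving the part ends at `v` (for `v` outside the part, it is a union of branches of the tree at
`v`). A hanging part can only be red to the part of `v`, and a singleton `{v}` can only be red to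
parts hanging at `v`. If two parts hang at the same outside vertex, merging them creates no new
red edge. Otherwise, since the tree is acyclic, some singleton `{v}` that is not a leaf has at most
one neighbour `u` of the same kind; all other neighbours of `v` lie in the unique part `X` hanging
at `v`, so `{v} ∪ X` hangs at `u`, whose red degree was at most one before this merge.
-/

structure IsPartition (P : Finset (Finset V)) : Prop where
  nonempty : ∀ A ∈ P, A.Nonempty
  disjoint : ∀ A ∈ P, ∀ B ∈ P, A ≠ B → Disjoint A B
  exists_mem : ∀ v, ∃ A ∈ P, v ∈ A

def mergeParts (P : Finset (Finset V)) (A B : Finset V) : Finset (Finset V) :=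
  insert (A ∪ B) ((P.erase A).erase B)

lemma mem_mergeParts {P : Finset (Finset V)} {A B C : Finset V} :
    C ∈ mergeParts P A B ↔ C = A ∪ B ∨ C ≠ B ∧ C ≠ A ∧ C ∈ P := by
  simp [mergeParts]

namespace IsPartition

variable {P : Finset (Finset V)} {A B : Finset V}

lemma eq_of_mem_of_mem (hP : IsPartition P) (hA : A ∈ P) (hB : B ∈ P) {x : V}
    (hxA : x ∈ A) (hxB : x ∈ B) : A = B := by
  by_contra hAB
  exact Finset.disjoint_left.1 (hP.disjoint A hA B hB hAB) hxA hxB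

lemma notMem_of_ne (hP : IsPartition P) (hA : A ∈ P) (hB : B ∈ P) (hAB : A ≠ B) {x : V}
    (hx : x ∈ A) : x ∉ B :=
  Finset.disjoint_left.1 (hP.disjoint A hA B hB hAB) hx

lemma mergeParts (hP : IsPartition P) (hA : A ∈ P) (hB : B ∈ P) (hAB : A ≠ B) :
    IsPartition (mergeParts P A B) where
  nonempty C hC := by
    rcases mem_mergeParts.1 hC with rfl | ⟨-, -, hC⟩
    · exact (hP.nonempty A hA).mono Finset.subset_union_left
    · exact hP.nonempty C hC
  disjoint := by
    have hunion : ∀ C ∈ P, C ≠ B → C ≠ A → Disjoint (A ∪ B) C := fun C hC hCB hCA =>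
      Finset.disjoint_union_left.2
        ⟨hP.disjoint A hA C hC hCA.symm, hP.disjoint B hB C hC hCB.symm⟩
    intro C hC D hD hCD
    rcases mem_mergeParts.1 hC with rfl | ⟨hCB, hCA, hC⟩ <;>
      rcases mem_mergeParts.1 hD with rfl | ⟨hDB, hDA, hD⟩
    · exact absurd rfl hCD
    · exact hunion D hD hDB hDA
    · exact (hunion C hC hCB hCA).symm
    · exact hP.disjoint C hC D hD hCD
  exists_mem v := by
    obtain ⟨C, hC, hvC⟩ := hP.exists_mem v
    by_cases hCAB : C = A ∨ C = B
    · refine ⟨A ∪ B, mem_mergeParts.2 (Or.inl rfl), ?_⟩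
      rcases hCAB with rfl | rfl <;> simp [hvC]
    · obtain ⟨hCA, hCB⟩ := not_or.1 hCAB
      exact ⟨C, mem_mergeParts.2 (Or.inr ⟨hCB, hCA, hC⟩), hvC⟩

lemma card_mergeParts (hP : IsPartition P) (hA : A ∈ P) (hB : B ∈ P) (hAB : A ≠ B) :
    (_root_.mergeParts P A B).card + 1 = P.card := by
  have hunion : A ∪ B ∉ (P.erase A).erase B := by
    intro h
    obtain ⟨-, hCA, hC⟩ : A ∪ B ≠ B ∧ A ∪ B ≠ A ∧ A ∪ B ∈ P := by simpa using h
    obtain ⟨a, ha⟩ := hP.nonempty A hA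
    exact hCA (hP.eq_of_mem_of_mem hC hA (Finset.mem_union_left B ha) ha)
  have hBA : B ∈ P.erase A := Finset.mem_erase.2 ⟨hAB.symm, hB⟩
  rw [_root_.mergeParts, Finset.card_insert_of_notMem hunion, Finset.card_erase_of_mem hBA,
    Finset.card_erase_of_mem hA]
  have := Finset.card_le_card (Finset.insert_subset hA (Finset.singleton_subset_iff.2 hB))
  rw [Finset.card_pair hAB] at this
  omega

lemma eq_singleton_univ [Fintype V] (hP : IsPartition P) (h : P.card = 1) :
    P = {Finset.univ} := by
  obtain ⟨A, rfl⟩ := Finset.card_eq_one.1 h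
  congr
  refine Finset.eq_univ_of_forall fun v => ?_
  obtain ⟨C, hC, hvC⟩ := hP.exists_mem v
  rwa [Finset.mem_singleton.1 hC] at hvC

end IsPartition

lemma isPartition_discretePart [Fintype V] : IsPartition (discretePart V) where
  nonempty A hA := by
    obtain ⟨v, -, rfl⟩ := Finset.mem_image.1 hA
    exact Finset.singleton_nonempty v
  disjoint A hA B hB hAB := by
    obtain ⟨v, -, rfl⟩ := Finset.mem_image.1 hA
    obtain ⟨w, -, rfl⟩ := Finset.mem_image.1 hB
    exact Finset.disjoint_singleton.2 fun hvw => hAB (hvw ▸ rfl)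
  exists_mem v :=
    ⟨{v}, Finset.mem_image_of_mem _ (Finset.mem_univ v), Finset.mem_singleton_self v⟩

lemma card_discretePart [Fintype V] : (discretePart V).card = Fintype.card V :=
  Finset.card_image_of_injective _ Finset.singleton_injective

namespace Trigraph

variable (G : Trigraph V) {P : Finset (Finset V)} {A X Y : Finset V}

theorem tww_le_of_invariant [Fintype V] [Nonempty V] (good : Finset (Finset V) → Prop) (k : ℕ)
    (h₀ : good (discretePart V)) (hpart : ∀ P, good P → IsPartition P)
    (hdeg : ∀ P, good P → G.maxRedDeg P ≤ k)
    (hstep : ∀ P, good P → 2 ≤ P.card → ∃ Q, MergeStep P Q ∧ good Q) :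
    G.tww ≤ k := by
  set n := Fintype.card V
  have hseq : ∀ m ≤ n - 1, ∃ f : ℕ → Finset (Finset V),
      IsCSeq V m f ∧ (∀ i ≤ m, good (f i)) ∧ (f m).card + m = n := by
    intro m
    induction m with
    | zero => exact fun _ => ⟨fun _ => discretePart V, ⟨rfl, by simp⟩, by simpa using h₀,
        card_discretePart⟩
    | succ m ih =>
      intro hm
      obtain ⟨f, ⟨hf₀, hfstep⟩, hfgood, hfcard⟩ := ih (by omega)
      obtain ⟨Q, hQ, hQgood⟩ := hstep (f m) (hfgood m le_rfl) (by omega)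
      obtain ⟨A, hA, B, hB, hAB, rfl⟩ :
          ∃ A ∈ f m, ∃ B ∈ f m, A ≠ B ∧ Q = mergeParts (f m) A B := hQ
      have hcard := (hpart _ (hfgood m le_rfl)).card_mergeParts hA hB hAB
      refine ⟨fun i => if i ≤ m then f i else mergeParts (f m) A B, ⟨by simpa using hf₀, ?_⟩,
        ?_, by simp only [Nat.not_succ_le_self, if_false]; omega⟩
      · intro i hi
        rcases Nat.lt_succ_iff_lt_or_eq.1 hi with him | rfl
        · simpa [him.le, Nat.succ_le_of_lt him] using hfstep i him
        · simpa using ⟨A, hA, B, hB, hAB, rfl⟩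
      · intro i hi
        by_cases him : i ≤ m
        · simpa [him] using hfgood i him
        · simpa [him] using hQgood
  obtain ⟨f, hf, hfgood, hfcard⟩ := hseq (n - 1) le_rfl
  have hn : 0 < n := Fintype.card_pos
  have hlast : f (n - 1) = {Finset.univ} :=
    (hpart _ (hfgood _ le_rfl)).eq_singleton_univ (by omega)
  exact Nat.sInf_le ⟨f, hf, hlast, fun i hi => hdeg _ (hfgood i hi)⟩

lemma redDeg_le_maxRedDeg (hA : A ∈ P) : G.redDeg P A ≤ G.maxRedDeg P :=
  Finset.le_sup (f := G.redDeg P) hA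

lemma redDeg_mergeParts_le_succ : G.redDeg (mergeParts P X Y) A ≤ G.redDeg P A + 1 := by
  refine (Finset.card_le_card fun C hC => ?_).trans (Finset.card_insert_le (X ∪ Y) _)
  obtain ⟨hC, hred⟩ := Finset.mem_filter.1 hC
  rcases mem_mergeParts.1 hC with rfl | ⟨-, -, hC⟩
  · exact Finset.mem_insert_self _ _
  · exact Finset.mem_insert_of_mem (Finset.mem_filter.2 ⟨hC, hred⟩)

lemma redDeg_mergeParts_le (hX : X ∈ P) (hY : Y ∈ P)
    (h : G.redAdj A (X ∪ Y) → G.redAdj A X ∨ G.redAdj A Y) :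
    G.redDeg (mergeParts P X Y) A ≤ G.redDeg P A := by
  let φ : Finset V → Finset V := fun B => if B = X ∨ B = Y then X ∪ Y else B
  refine (Finset.card_le_card fun C hC => ?_).trans
    (Finset.card_image_le (s := P.filter (G.redAdj A)) (f := φ))
  obtain ⟨hC, hred⟩ := Finset.mem_filter.1 hC
  rcases mem_mergeParts.1 hC with rfl | ⟨hCY, hCX, hC⟩
  · rcases h hred with hredX | hredY
    · exact Finset.mem_image.2 ⟨X, Finset.mem_filter.2 ⟨hX, hredX⟩, by simp [φ]⟩
    · exact Finset.mem_image.2 ⟨Y, Finset.mem_filter.2 ⟨hY, hredY⟩, by simp [φ]⟩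
  · exact Finset.mem_image.2 ⟨C, Finset.mem_filter.2 ⟨hC, hred⟩, by simp [φ, hCX, hCY]⟩

end Trigraph

namespace SimpleGraph

variable {G : SimpleGraph V} {P : Finset (Finset V)} {A X Y : Finset V} {u v : V}

/-- Otherwise a path inside `S` could be extended forever. -/
theorem IsAcyclic.exists_mem_forall_adj_eq [Finite V] (hG : G.IsAcyclic) {S : Set V}
    (hS : S.Nonempty) : ∃ v ∈ S, ∃ u ∈ S, ∀ w ∈ S, G.Adj v w → w = u := by
  have := Fintype.ofFinite V
  by_contra! hcon
  have hpath : ∀ n, ∃ (a b : V) (p : G.Walk a b), p.IsPath ∧ (∀ x ∈ p.support, x ∈ S) ∧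
      p.length = n := by
    intro n
    induction n with
    | zero => exact ⟨hS.some, _, .nil, .nil, by simpa using hS.some_mem, rfl⟩
    | succ n ih =>
      obtain ⟨a, b, p, hp, hpS, rfl⟩ := ih
      obtain ⟨w, hwS, haw, hw⟩ := hcon a (hpS a p.start_mem_support) p.snd
        (hpS _ (p.getVert_mem_support 1))
      have hwp : w ∉ p.support := fun h => hw (hG.eq_snd_of_adj_start hp haw h)
      refine ⟨w, b, .cons haw.symm p, hp.cons hwp, ?_, rfl⟩
      simpa [hwS] using hpS
  obtain ⟨a, b, p, hp, -, hlen⟩ := hpath (Fintype.card V)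
  exact (hlen ▸ hp.length_lt).false

lemma toTrigraph_redAdj_iff :
    G.toTrigraph.redAdj A X ↔
      A ≠ X ∧ (∃ a ∈ A, ∃ x ∈ X, G.Adj a x) ∧ ¬ ∀ a ∈ A, ∀ x ∈ X, G.Adj a x := by
  simp [Trigraph.redAdj, toTrigraph]

lemma not_toTrigraph_redAdj_singleton (a b : V) : ¬ G.toTrigraph.redAdj {a} {b} := by
  simp [toTrigraph_redAdj_iff]

lemma toTrigraph_redAdj_union (hX : ∃ a ∈ A, ∃ x ∈ X, G.Adj a x)
    (hY : ∃ a ∈ A, ∃ y ∈ Y, G.Adj a y) (hAX : A ≠ X) (hAY : A ≠ Y)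
    (h : G.toTrigraph.redAdj A (X ∪ Y)) :
    G.toTrigraph.redAdj A X ∨ G.toTrigraph.redAdj A Y := by
  simp only [toTrigraph_redAdj_iff, Finset.mem_union] at h ⊢
  by_contra! hcon
  exact h.2.2 fun a ha z hz => hz.elim (hcon.1 hAX hX a ha z) (hcon.2 hAY hY a ha z)

lemma toTrigraph_maxRedDeg_discretePart [Fintype V] :
    G.toTrigraph.maxRedDeg (discretePart V) = 0 := by
  refine Nat.eq_zero_of_le_zero (Finset.sup_le fun A hA => ?_)
  refine (Finset.card_eq_zero.2 (Finset.filter_eq_empty_iff.2 fun B hB => ?_)).le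
  obtain ⟨a, -, rfl⟩ := Finset.mem_image.1 hA
  obtain ⟨b, -, rfl⟩ := Finset.mem_image.1 hB
  exact not_toTrigraph_redAdj_singleton a b

def HangsAt (G : SimpleGraph V) (X : Finset V) (v : V) : Prop :=
  ∀ x ∈ X, ∀ y, G.Adj x y → y ∈ X ∨ y = v

namespace HangsAt

lemma eq_of_adj (h : G.HangsAt X v) {x y : V} (hx : x ∈ X) (hxy : G.Adj x y) (hy : y ∉ X) :
    y = v :=
  (h x hx y hxy).resolve_left hy

lemma union (hX : G.HangsAt X v) (hY : G.HangsAt Y v) : G.HangsAt (X ∪ Y) v := by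
  intro x hx y hxy
  simp only [Finset.mem_union] at hx ⊢
  rcases hx with hx | hx
  · rcases hX x hx y hxy with h | h <;> simp [h]
  · rcases hY x hx y hxy with h | h <;> simp [h]

lemma singleton_union (hX : G.HangsAt X v) (hv : ∀ w, G.Adj v w → w ∈ X ∨ w = u) :
    G.HangsAt ({v} ∪ X) u := by
  intro x hx y hxy
  simp only [Finset.mem_union, Finset.mem_singleton] at hx ⊢
  rcases hx with rfl | hx
  · rcases hv y hxy with h | h <;> simp [h]
  · rcases hX x hx y hxy with h | h <;> simp [h]

lemma exists_adj (hG : G.Connected) (h : G.HangsAt X v) (hX : X.Nonempty) (hv : v ∉ X) :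
    ∃ x ∈ X, G.Adj x v := by
  obtain ⟨x, hx⟩ := hX
  obtain ⟨d, -, hd, hd'⟩ := (hG.preconnected x v).some.exists_boundary_dart (X : Set V) hx hv
  exact ⟨d.fst, hd, h.eq_of_adj hd d.adj hd' ▸ d.adj⟩

lemma eq_univ [Fintype V] (hG : G.Connected) (h : G.HangsAt X v) (hv : v ∈ X) :
    X = Finset.univ := by
  refine Finset.eq_univ_of_forall fun w => by_contra fun hw => ?_
  obtain ⟨d, -, hd, hd'⟩ := (hG.preconnected v w).some.exists_boundary_dart (X : Set V) hv hw
  exact hd' (h.eq_of_adj hd d.adj hd' ▸ hv)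

end HangsAt

lemma redDeg_le_one_of_hangsAt (hP : IsPartition P) (hX : X ∈ P) (h : G.HangsAt X v) :
    G.toTrigraph.redDeg P X ≤ 1 := by
  have hv : ∀ Y ∈ P.filter (G.toTrigraph.redAdj X), v ∈ Y := by
    intro Y hY
    obtain ⟨hY, hXY, ⟨x, hx, y, hy, hxy⟩, -⟩ := by simpa [toTrigraph_redAdj_iff] using hY
    exact h.eq_of_adj hx hxy (hP.notMem_of_ne hY hX (Ne.symm hXY) hy) ▸ hy
  refine Finset.card_le_one.2 fun Y hY Z hZ => ?_
  exact hP.eq_of_mem_of_mem (Finset.mem_filter.1 hY).1 (Finset.mem_filter.1 hZ).1 (hv Y hY)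
    (hv Z hZ)

structure IsHangingPartition (G : SimpleGraph V) (P : Finset (Finset V)) : Prop
    extends IsPartition P where
  singleton_or_hangsAt : ∀ X ∈ P, (∃ v, X = {v}) ∨ ∃ v, G.HangsAt X v

lemma isHangingPartition_discretePart [Fintype V] : G.IsHangingPartition (discretePart V) where
  toIsPartition := isPartition_discretePart
  singleton_or_hangsAt X hX := by
    obtain ⟨v, -, rfl⟩ := Finset.mem_image.1 hX
    exact Or.inl ⟨v, rfl⟩

namespace IsHangingPartition

lemma maxRedDeg_le_two (hP : G.IsHangingPartition P)
    (h : ∀ a, {a} ∈ P → G.toTrigraph.redDeg P {a} ≤ 2) : G.toTrigraph.maxRedDeg P ≤ 2 := by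
  refine Finset.sup_le fun X hX => ?_
  rcases hP.singleton_or_hangsAt X hX with ⟨a, rfl⟩ | ⟨v, hXv⟩
  · exact h a hX
  · exact (redDeg_le_one_of_hangsAt hP.toIsPartition hX hXv).trans one_le_two

lemma hangsAt_of_redAdj (hP : G.IsHangingPartition P) (hv : {v} ∈ P) (hY : Y ∈ P)
    (hred : G.toTrigraph.redAdj {v} Y) : v ∉ Y ∧ G.HangsAt Y v := by
  obtain ⟨hvY, ⟨a, ha, y, hy, hay⟩, -⟩ := toTrigraph_redAdj_iff.1 hred
  obtain rfl := Finset.mem_singleton.1 ha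
  have haY : a ∉ Y := hP.notMem_of_ne hv hY hvY (Finset.mem_singleton_self a)
  refine ⟨haY, ?_⟩
  rcases hP.singleton_or_hangsAt Y hY with ⟨b, rfl⟩ | ⟨t, hYt⟩
  · exact absurd hred (not_toTrigraph_redAdj_singleton a b)
  · exact hYt.eq_of_adj hy hay.symm haY ▸ hYt

lemma redDeg_singleton_le_one (hP : G.IsHangingPartition P) (hv : {v} ∈ P)
    (huniq : ∀ X ∈ P, ∀ Y ∈ P, v ∉ X → v ∉ Y → G.HangsAt X v → G.HangsAt Y v → X = Y) :
    G.toTrigraph.redDeg P {v} ≤ 1 := by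
  refine Finset.card_le_one.2 fun X hX Y hY => ?_
  obtain ⟨hX, hredX⟩ := Finset.mem_filter.1 hX
  obtain ⟨hY, hredY⟩ := Finset.mem_filter.1 hY
  obtain ⟨hvX, hXv⟩ := hP.hangsAt_of_redAdj hv hX hredX
  obtain ⟨hvY, hYv⟩ := hP.hangsAt_of_redAdj hv hY hredY
  exact huniq X hX Y hY hvX hvY hXv hYv

lemma exists_hangsAt_of_adj (hP : G.IsHangingPartition P) (hv : {v} ∈ P) {w : V}
    (hvw : G.Adj v w) (hw : ¬ ({w} ∈ P ∧ ∀ t, ¬ G.HangsAt {w} t)) :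
    ∃ X ∈ P, w ∈ X ∧ v ∉ X ∧ G.HangsAt X v := by
  obtain ⟨X, hX, hwX⟩ := hP.exists_mem w
  have hvX : v ∉ X := hP.notMem_of_ne hv hX
    (fun h => hvw.ne (Finset.mem_singleton.1 (h ▸ hwX)).symm) (Finset.mem_singleton_self v)
  obtain ⟨t, hXt⟩ : ∃ t, G.HangsAt X t := by
    rcases hP.singleton_or_hangsAt X hX with ⟨b, rfl⟩ | h
    · obtain rfl := Finset.mem_singleton.1 hwX
      simpa [hX] using hw
    · exact h
  exact ⟨X, hX, hwX, hvX, hXt.eq_of_adj hwX hvw.symm hvX ▸ hXt⟩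

/-- Otherwise a part `X` hanging at `v` together with the part of `v` is closed under adjacency,
which leaves room for at most two parts. -/
lemma exists_singleton_not_hangsAt [Fintype V] (hG : G.Connected) (hP : G.IsHangingPartition P)
    (hcard : 3 ≤ P.card) : ∃ v, {v} ∈ P ∧ ∀ t, ¬ G.HangsAt {v} t := by
  by_contra! hall
  have hhang : ∀ X ∈ P, ∃ t, G.HangsAt X t := fun X hX => by
    rcases hP.singleton_or_hangsAt X hX with ⟨v, rfl⟩ | h
    · exact hall v hX
    · exact h
  obtain ⟨X, hX⟩ := Finset.card_pos.1 (by omega : 0 < P.card)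
  obtain ⟨v, hXv⟩ := hhang X hX
  obtain ⟨Y, hY, hvY⟩ := hP.exists_mem v
  obtain ⟨w, hYw⟩ := hhang Y hY
  have hclosed : G.HangsAt (X ∪ Y) v := by
    by_cases hvX : v ∈ X
    · obtain rfl := hP.eq_of_mem_of_mem hX hY hvX hvY
      simpa using hXv
    obtain ⟨x, hx, hxv⟩ := hXv.exists_adj hG (hP.nonempty X hX) hvX
    have hXY : X ≠ Y := fun h => hvX (h ▸ hvY)
    obtain rfl : x = w := hYw.eq_of_adj hvY hxv.symm (hP.notMem_of_ne hX hY hXY hx)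
    intro z hz y hzy
    simp only [Finset.mem_union] at hz ⊢
    rcases hz with hz | hz
    · rcases hXv z hz y hzy with h | h <;> simp [h]
    · rcases hYw z hz y hzy with h | rfl
      · simp [h]
      · simp [hx]
  have huniv := hclosed.eq_univ hG (Finset.mem_union_right X hvY)
  obtain ⟨C, hC, hCXY⟩ := Finset.exists_mem_notMem_of_card_lt_card
    ((Finset.card_le_two (a := X) (b := Y)).trans_lt hcard)
  obtain ⟨c, hc⟩ := hP.nonempty C hC
  rcases Finset.mem_union.1 (huniv ▸ Finset.mem_univ c : c ∈ X ∪ Y) with hcX | hcY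
  · exact hCXY (by simp [hP.eq_of_mem_of_mem hC hX hc hcX])
  · exact hCXY (by simp [hP.eq_of_mem_of_mem hC hY hc hcY])

lemma mergeParts (hP : G.IsHangingPartition P) (hX : X ∈ P) (hY : Y ∈ P) (hXY : X ≠ Y)
    (hXYu : G.HangsAt (X ∪ Y) u)
    (hdeg : ∀ a, {a} ∈ P → {a} ≠ X → {a} ≠ Y →
      G.toTrigraph.redDeg (_root_.mergeParts P X Y) {a} ≤ 2) :
    G.IsHangingPartition (_root_.mergeParts P X Y) ∧
      G.toTrigraph.maxRedDeg (_root_.mergeParts P X Y) ≤ 2 := by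
  have hQ : G.IsHangingPartition (_root_.mergeParts P X Y) :=
    { toIsPartition := hP.toIsPartition.mergeParts hX hY hXY
      singleton_or_hangsAt := fun Z hZ => by
        rcases mem_mergeParts.1 hZ with rfl | ⟨-, -, hZ⟩
        · exact Or.inr ⟨u, hXYu⟩
        · exact hP.singleton_or_hangsAt Z hZ }
  refine ⟨hQ, hQ.maxRedDeg_le_two fun a ha => ?_⟩
  rcases mem_mergeParts.1 ha with h | ⟨haY, haX, haP⟩
  · exact (redDeg_le_one_of_hangsAt hQ.toIsPartition ha (h ▸ hXYu)).trans one_le_two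
  · exact hdeg a haP haX haY

lemma exists_mergeStep_of_card_eq_two (hP : G.IsHangingPartition P) (hcard : P.card = 2) :
    ∃ Q, MergeStep P Q ∧ G.IsHangingPartition Q ∧ G.toTrigraph.maxRedDeg Q ≤ 2 := by
  obtain ⟨A, B, hAB, rfl⟩ := Finset.card_eq_two.1 hcard
  have hA : A ∈ ({A, B} : Finset (Finset V)) := Finset.mem_insert_self A {B}
  have hB : B ∈ ({A, B} : Finset (Finset V)) :=
    Finset.mem_insert_of_mem (Finset.mem_singleton_self B)
  obtain ⟨a, -⟩ := hP.nonempty A hA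
  have hclosed : G.HangsAt (A ∪ B) a := fun _ _ y _ => by
    obtain ⟨C, hC, hyC⟩ := hP.exists_mem y
    rcases Finset.mem_insert.1 hC with rfl | hC
    · exact Or.inl (Finset.mem_union_left B hyC)
    · exact Or.inl (Finset.mem_union_right A (Finset.mem_singleton.1 hC ▸ hyC))
  refine ⟨_, ⟨A, hA, B, hB, hAB, rfl⟩, hP.mergeParts hA hB hAB hclosed ?_⟩
  intro b hb hbA hbB
  simp [hbA, hbB] at hb

lemma mergeParts_of_hangsAt (hG : G.Connected) (hP : G.IsHangingPartition P)
    (hdeg : G.toTrigraph.maxRedDeg P ≤ 2) (hX : X ∈ P) (hY : Y ∈ P) (hXY : X ≠ Y)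
    (hvX : v ∉ X) (hvY : v ∉ Y) (hXv : G.HangsAt X v) (hYv : G.HangsAt Y v) :
    G.IsHangingPartition (_root_.mergeParts P X Y) ∧
      G.toTrigraph.maxRedDeg (_root_.mergeParts P X Y) ≤ 2 := by
  refine hP.mergeParts hX hY hXY (hXv.union hYv) fun a ha haX haY => ?_
  refine (G.toTrigraph.redDeg_mergeParts_le hX hY fun hred => ?_).trans
    ((G.toTrigraph.redDeg_le_maxRedDeg ha).trans hdeg)
  obtain ⟨-, ⟨b, hb, z, hz, hbz⟩, -⟩ := toTrigraph_redAdj_iff.1 hred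
  obtain rfl := Finset.mem_singleton.1 hb
  have hbXY : b ∉ X ∪ Y := Finset.notMem_union.2
    ⟨hP.notMem_of_ne ha hX haX (Finset.mem_singleton_self b),
      hP.notMem_of_ne ha hY haY (Finset.mem_singleton_self b)⟩
  obtain rfl : b = v := (hXv.union hYv).eq_of_adj hz hbz.symm hbXY
  obtain ⟨x, hx, hxb⟩ := hXv.exists_adj hG (hP.nonempty X hX) hvX
  obtain ⟨y, hy, hyb⟩ := hYv.exists_adj hG (hP.nonempty Y hY) hvY
  exact toTrigraph_redAdj_union ⟨b, hb, x, hx, hxb.symm⟩ ⟨b, hb, y, hy, hyb.symm⟩ haX haY hred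

end IsHangingPartition

lemma IsTree.exists_mergeStep_of_hangsAt_unique [Fintype V] (hT : G.IsTree)
    (hP : G.IsHangingPartition P) (hdeg : G.toTrigraph.maxRedDeg P ≤ 2) (hcard : 3 ≤ P.card)
    (huniq : ∀ v, ∀ X ∈ P, ∀ Y ∈ P, v ∉ X → v ∉ Y → G.HangsAt X v → G.HangsAt Y v → X = Y) :
    ∃ Q, MergeStep P Q ∧ G.IsHangingPartition Q ∧ G.toTrigraph.maxRedDeg Q ≤ 2 := by
  set S : Set V := {v | {v} ∈ P ∧ ∀ t, ¬ G.HangsAt {v} t}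
  obtain ⟨v, ⟨hvP, hvS⟩, u, ⟨huP, -⟩, hvu⟩ := hT.isAcyclic.exists_mem_forall_adj_eq
    (S := S) (hP.exists_singleton_not_hangsAt hT.connected hcard)
  obtain ⟨w, hvw, hwS⟩ : ∃ w, G.Adj v w ∧ w ∉ S := by
    by_contra! h
    refine hvS u fun x hx y hxy => Or.inr (hvu y (h y ?_) ?_)
    all_goals simpa [Finset.mem_singleton.1 hx] using hxy
  obtain ⟨X, hX, -, hvX, hXv⟩ := hP.exists_hangsAt_of_adj hvP hvw hwS
  have hN : ∀ w, G.Adj v w → w ∈ X ∨ w = u := by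
    intro w hvw
    by_cases hwS : w ∈ S
    · exact Or.inr (hvu w hwS hvw)
    · obtain ⟨X', hX', hwX', hvX', hX'v⟩ := hP.exists_hangsAt_of_adj hvP hvw hwS
      exact Or.inl (huniq v X' hX' X hX hvX' hvX hX'v hXv ▸ hwX')
  have hvX' : {v} ≠ X := fun h => hvX (h ▸ Finset.mem_singleton_self v)
  have hZ : G.HangsAt ({v} ∪ X) u := hXv.singleton_union hN
  refine ⟨_, ⟨{v}, hvP, X, hX, hvX', rfl⟩, hP.mergeParts hvP hX hvX' hZ ?_⟩
  intro a ha hav haX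
  by_cases hau : a = u
  · subst hau
    exact G.toTrigraph.redDeg_mergeParts_le_succ.trans
      (Nat.succ_le_succ (hP.redDeg_singleton_le_one huP (huniq a)))
  refine (G.toTrigraph.redDeg_mergeParts_le hvP hX fun hred => ?_).trans
    ((G.toTrigraph.redDeg_le_maxRedDeg ha).trans hdeg)
  obtain ⟨-, ⟨b, hb, z, hz, hbz⟩, -⟩ := toTrigraph_redAdj_iff.1 hred
  obtain rfl := Finset.mem_singleton.1 hb
  have hbZ : b ∉ {v} ∪ X := Finset.notMem_union.2
    ⟨hP.notMem_of_ne ha hvP hav (Finset.mem_singleton_self b),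
      hP.notMem_of_ne ha hX haX (Finset.mem_singleton_self b)⟩
  exact absurd (hZ.eq_of_adj hz hbz.symm hbZ) hau

lemma IsTree.exists_mergeStep [Fintype V] (hT : G.IsTree) (hP : G.IsHangingPartition P)
    (hdeg : G.toTrigraph.maxRedDeg P ≤ 2) (hcard : 2 ≤ P.card) :
    ∃ Q, MergeStep P Q ∧ G.IsHangingPartition Q ∧ G.toTrigraph.maxRedDeg Q ≤ 2 := by
  rcases hcard.eq_or_lt with h2 | h3
  · exact hP.exists_mergeStep_of_card_eq_two h2.symm
  by_cases hpair : ∃ v, ∃ X ∈ P, ∃ Y ∈ P,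
      X ≠ Y ∧ v ∉ X ∧ v ∉ Y ∧ G.HangsAt X v ∧ G.HangsAt Y v
  · obtain ⟨v, X, hX, Y, hY, hXY, hvX, hvY, hXv, hYv⟩ := hpair
    exact ⟨_, ⟨X, hX, Y, hY, hXY, rfl⟩,
      hP.mergeParts_of_hangsAt hT.connected hdeg hX hY hXY hvX hvY hXv hYv⟩
  · refine hT.exists_mergeStep_of_hangsAt_unique hP hdeg h3
      fun v X hX Y hY hvX hvY hXv hYv => by_contra fun hXY => ?_
    exact hpair ⟨v, X, hX, Y, hY, hXY, hvX, hvY, hXv, hYv⟩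

end SimpleGraph

/-- every tree has twin-width at most 2. -/
theorem tww_tree_le_two {V : Type*} [Fintype V] (G : SimpleGraph V) (h : G.IsTree) :
    (G.toTrigraph).tww ≤ 2 := by
  have := h.connected.nonempty
  refine G.toTrigraph.tww_le_of_invariant
    (fun P => G.IsHangingPartition P ∧ G.toTrigraph.maxRedDeg P ≤ 2) 2
    ⟨G.isHangingPartition_discretePart,
      G.toTrigraph_maxRedDeg_discretePart.trans_le (by norm_num)⟩
    (fun P hP => hP.1.toIsPartition) (fun P hP => hP.2)
    (fun P hP hcard => h.exists_mergeStep hP.1 hP.2 hcard)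

end
end
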